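/- arXiv:1106.1781 — 2 statements merged into one kernel-verified Lean document; each statement's English description precedes it below -/
import Mathlib

section
/- For every ε > 0 there exists a constant c(ε) > 0, independent of N and of the grid function, such that for every integer N ≥ 1 and every periodic grid function z one has max_{1 ≤ i ≤ N} |(D₀z)_i|² ≤ ε ‖D₊³D₋²z‖_h² + c(ε) ‖z‖_h². -/
/-- Forward difference operator `(D₊u)_i = (u_{i+1} − u_i)/h`. -/
noncomputable def Dp (h : ℝ) (u : ℤ → ℝ) : ℤ → ℝ := fun i => (u (i + 1) - u i) / h

/-- Backward difference operator `(D₋u)_i = (u_i − u_{i−1})/h`. -/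
noncomputable def Dm (h : ℝ) (u : ℤ → ℝ) : ℤ → ℝ := fun i => (u i - u (i - 1)) / h

/-- Central difference operator `(D₀u)_i = (u_{i+1} − u_{i−1})/(2h)`. -/
noncomputable def D0 (h : ℝ) (u : ℤ → ℝ) : ℤ → ℝ := fun i => (u (i + 1) - u (i - 1)) / (2 * h)

/-- Discrete inner product `(f,g)_h = h Σ_{i=1}^N f_i g_i`. -/
noncomputable def iph (N : ℕ) (h : ℝ) (f g : ℤ → ℝ) : ℝ :=
  h * ∑ i ∈ Finset.Icc (1 : ℤ) (N : ℤ), f i * g i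

/-- Discrete squared norm `‖f‖_h² = h Σ_{i=1}^N f_i²`. -/
noncomputable def nh2 (N : ℕ) (h : ℝ) (f : ℤ → ℝ) : ℝ :=
  h * ∑ i ∈ Finset.Icc (1 : ℤ) (N : ℤ), (f i) ^ 2

/-- Discrete norm `‖f‖_h`. -/
noncomputable def normh (N : ℕ) (h : ℝ) (f : ℤ → ℝ) : ℝ := Real.sqrt (nh2 N h f)

/-- A periodic grid function with period `N`: `u_{i+N} = u_i` for all `i`. -/
def PeriodicGrid (N : ℕ) (u : ℤ → ℝ) : Prop := ∀ i : ℤ, u (i + N) = u i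

/-!
Write `B k = ‖D₊ᵏ z‖_h²`. A discrete Sobolev inequality bounds every value of a grid function by
its mean absolute value plus its total variation, so `w_i² ≤ 2 (‖w‖² + ‖D₊w‖²)` when `N h = 1`;
with `w = D₀z` and `‖D₀v‖ ≤ ‖D₊v‖` the left-hand side is at most `2 (B 1 + B 2)`.
Summation by parts and Cauchy–Schwarz give `B (k+1)² ≤ B k * B (k+2)`. Then `r^k B k` is
log-convex as well, hence convex by AM-GM, hence bounded on `[0, 5]` by its values at the
endpoints: `r^k B k ≤ B 0 + r⁵ B 5`, and a small `r` gives `B k ≤ ε B 5 + c B 0`.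
Finally `‖D₊³D₋²z‖ = ‖D₊⁵z‖`, since `D₋` is `D₊` shifted by one cell.
-/

open Finset

section LogConvex

variable {B : ℕ → ℝ}

lemma le_max_of_two_mul_le_add (hB : ∀ k, 2 * B (k + 1) ≤ B k + B (k + 2)) {k n : ℕ}
    (hkn : k ≤ n) : B k ≤ max (B 0) (B n) := by
  have hd : Monotone fun j => B (j + 1) - B j :=
    monotone_nat_of_le_succ fun j => by linarith [hB j]
  rcases le_or_gt 0 (B (k + 1) - B k) with hk | hk
  · refine le_max_of_le_right (sub_nonneg.1 ?_)
    rw [← sum_Ico_sub B hkn]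
    exact sum_nonneg fun j hj => hk.trans (hd (mem_Ico.1 hj).1)
  · refine le_max_of_le_left (sub_nonpos.1 ?_)
    rw [← sum_range_sub B k]
    exact sum_nonpos fun j hj => (hd (mem_range.1 hj).le).trans hk.le

lemma pow_mul_le_add_of_sq_le_mul (hB0 : ∀ k, 0 ≤ B k)
    (hB : ∀ k, B (k + 1) ^ 2 ≤ B k * B (k + 2)) {r : ℝ} (hr : 0 ≤ r) {k n : ℕ} (hkn : k ≤ n) :
    r ^ k * B k ≤ B 0 + r ^ n * B n := by
  set C : ℕ → ℝ := fun j => r ^ j * B j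
  have hC0 : ∀ j, 0 ≤ C j := fun j => mul_nonneg (pow_nonneg hr j) (hB0 j)
  have hC : ∀ j, 2 * C (j + 1) ≤ C j + C (j + 2) := fun j =>
    two_mul_le_add_of_sq_le_mul (hC0 j) (hC0 (j + 2)) <| by
      calc C (j + 1) ^ 2 = (r ^ (j + 1)) ^ 2 * B (j + 1) ^ 2 := by ring
        _ ≤ (r ^ (j + 1)) ^ 2 * (B j * B (j + 2)) := by gcongr; exact hB j
        _ = C j * C (j + 2) := by ring
  calc C k ≤ max (C 0) (C n) := le_max_of_two_mul_le_add hC hkn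
    _ ≤ C 0 + C n := max_le_add_of_nonneg (hC0 0) (hC0 n)
    _ = B 0 + r ^ n * B n := by simp [C]

lemma le_mul_add_div_pow_of_sq_le_mul (hB0 : ∀ k, 0 ≤ B k)
    (hB : ∀ k, B (k + 1) ^ 2 ≤ B k * B (k + 2)) {δ : ℝ} (hδ0 : 0 < δ) (hδ1 : δ ≤ 1) {k n : ℕ}
    (hkn : k < n) : B k ≤ δ * B n + B 0 / δ ^ k := by
  obtain ⟨m, rfl⟩ := Nat.exists_eq_add_of_lt hkn
  have hδk : 0 < δ ^ k := pow_pos hδ0 k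
  have hδm : δ ^ (m + 1) ≤ δ := pow_le_of_le_one hδ0.le hδ1 m.succ_ne_zero
  have hpow := pow_mul_le_add_of_sq_le_mul hB0 hB hδ0.le hkn.le
  have hmul : δ ^ k * B k ≤ δ ^ k * (δ ^ (m + 1) * B (k + m + 1) + B 0 / δ ^ k) := by
    rw [mul_add, mul_div_cancel₀ _ hδk.ne', ← mul_assoc, ← pow_add, ← add_assoc]
    linarith
  calc B k ≤ δ ^ (m + 1) * B (k + m + 1) + B 0 / δ ^ k := le_of_mul_le_mul_left hmul hδk
    _ ≤ δ * B (k + m + 1) + B 0 / δ ^ k := by gcongr; exact hB0 _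

end LogConvex

lemma sum_Ico_sub_int {M : Type*} [AddCommGroup M] (f : ℤ → M) {a b : ℤ} (hab : a ≤ b) :
    ∑ i ∈ Ico a b, (f (i + 1) - f i) = f b - f a := by
  induction b, hab using Int.leInduction with
  | base => simp
  | succ b hab ih => rw [← sum_Ico_add_eq_sum_Ico_add_one hab, ih]; abel

section Grid

variable {N : ℕ} {h : ℝ} {u v : ℤ → ℝ}

namespace PeriodicGrid

lemma comp_add (hu : PeriodicGrid N u) (k : ℤ) : PeriodicGrid N fun i => u (i + k) :=
  fun i => by dsimp only; rw [add_right_comm, hu]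

lemma comp (hu : PeriodicGrid N u) (g : ℝ → ℝ) : PeriodicGrid N (g ∘ u) :=
  fun i => congrArg g (hu i)

lemma mul (hu : PeriodicGrid N u) (hv : PeriodicGrid N v) : PeriodicGrid N (u * v) :=
  fun i => congrArg₂ (· * ·) (hu i) (hv i)

lemma Dp (hu : PeriodicGrid N u) : PeriodicGrid N (Dp h u) :=
  fun i => by simp only [_root_.Dp]; rw [add_right_comm, hu, hu]

lemma iterate_Dp (hu : PeriodicGrid N u) (n : ℕ) : PeriodicGrid N ((_root_.Dp h)^[n] u) := by
  induction n with
  | zero => exact hu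
  | succ n ih => rw [Function.iterate_succ_apply']; exact ih.Dp

lemma sum_comp_add_one (hu : PeriodicGrid N u) :
    ∑ i ∈ Icc (1 : ℤ) N, u (i + 1) = ∑ i ∈ Icc (1 : ℤ) N, u i := by
  have hsum : ∑ i ∈ Icc (1 : ℤ) N, (u (i + 1) - u i) = 0 := by
    rw [← Ico_add_one_right_eq_Icc, sum_Ico_sub_int u (by omega), add_comm, hu, sub_self]
  rwa [sum_sub_distrib, sub_eq_zero] at hsum

lemma sum_comp_add (hu : PeriodicGrid N u) (k : ℤ) :
    ∑ i ∈ Icc (1 : ℤ) N, u (i + k) = ∑ i ∈ Icc (1 : ℤ) N, u i := by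
  induction k using Int.induction_on with
  | zero => simp
  | succ k ih =>
    rw [← ih, ← (hu.comp_add k).sum_comp_add_one]
    simp only [add_assoc, add_comm (1 : ℤ)]
  | pred k ih =>
    rw [← ih, ← (hu.comp_add (-k - 1)).sum_comp_add_one]
    simp only [add_assoc, add_sub_cancel]

lemma nh2_comp_add (hu : PeriodicGrid N u) (k : ℤ) :
    nh2 N h (fun i => u (i + k)) = nh2 N h u :=
  congrArg (h * ·) ((hu.comp (· ^ 2)).sum_comp_add k)

end PeriodicGrid

lemma nh2_nonneg (hh : 0 ≤ h) (u : ℤ → ℝ) : 0 ≤ nh2 N h u :=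
  mul_nonneg hh (sum_nonneg fun _ _ => sq_nonneg _)

lemma Dp_comp_add (u : ℤ → ℝ) (k : ℤ) :
    Dp h (fun i => u (i + k)) = fun i => Dp h u (i + k) := by
  funext i; simp only [Dp, add_right_comm i 1 k]

lemma Dm_eq_Dp_comp_add_neg_one (u : ℤ → ℝ) : Dm h u = fun i => Dp h u (i + -1) := by
  funext i; simp only [Dm, Dp, ← sub_eq_add_neg, sub_add_cancel]

lemma Dm_Dm_eq_Dp_Dp_comp_add_neg_two (u : ℤ → ℝ) :
    Dm h (Dm h u) = fun i => Dp h (Dp h u) (i + -2) := by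
  rw [Dm_eq_Dp_comp_add_neg_one, Dm_eq_Dp_comp_add_neg_one, Dp_comp_add]
  funext i; norm_num [add_assoc]

lemma nh2_Dm (hu : PeriodicGrid N u) : nh2 N h (Dm h u) = nh2 N h (Dp h u) := by
  rw [Dm_eq_Dp_comp_add_neg_one, hu.Dp.nh2_comp_add]

lemma sum_Dp_mul_eq_neg_sum_mul_Dm (hu : PeriodicGrid N u) (hv : PeriodicGrid N v) :
    ∑ i ∈ Icc (1 : ℤ) N, Dp h u i * v i = -∑ i ∈ Icc (1 : ℤ) N, u i * Dm h v i := by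
  have hshift := (hu.mul (hv.comp_add (-1))).sum_comp_add_one
  simp only [Pi.mul_apply, add_neg_cancel_right] at hshift
  rw [eq_neg_iff_add_eq_zero, ← sum_add_distrib]
  calc ∑ i ∈ Icc (1 : ℤ) N, (Dp h u i * v i + u i * Dm h v i)
      = (∑ i ∈ Icc (1 : ℤ) N, u (i + 1) * v i
          - ∑ i ∈ Icc (1 : ℤ) N, u i * v (i + -1)) / h := by
        rw [← sum_sub_distrib, sum_div]
        congr with i
        simp only [Dp, Dm, ← sub_eq_add_neg]
        ring
    _ = 0 := by rw [hshift, sub_self, zero_div]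

lemma iph_sq_le (u v : ℤ → ℝ) : iph N h u v ^ 2 ≤ nh2 N h u * nh2 N h v := by
  unfold iph nh2
  calc (h * ∑ i ∈ Icc (1 : ℤ) N, u i * v i) ^ 2
        = h ^ 2 * (∑ i ∈ Icc (1 : ℤ) N, u i * v i) ^ 2 := by ring
    _ ≤ h ^ 2 * ((∑ i ∈ Icc (1 : ℤ) N, u i ^ 2) * ∑ i ∈ Icc (1 : ℤ) N, v i ^ 2) := by
        gcongr; exact sum_mul_sq_le_sq_mul_sq _ _ _
    _ = _ := by ring

lemma nh2_Dp_eq_neg_iph (hu : PeriodicGrid N u) :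
    nh2 N h (Dp h u) = -iph N h u (Dm h (Dp h u)) := by
  unfold nh2 iph
  rw [← mul_neg, ← sum_Dp_mul_eq_neg_sum_mul_Dm hu hu.Dp]
  simp only [sq]

lemma sq_nh2_Dp_le (hu : PeriodicGrid N u) :
    nh2 N h (Dp h u) ^ 2 ≤ nh2 N h u * nh2 N h (Dp h (Dp h u)) := by
  rw [nh2_Dp_eq_neg_iph hu, neg_sq, ← nh2_Dm hu.Dp]
  exact iph_sq_le _ _

lemma Dp_D0_comm (u : ℤ → ℝ) : Dp h (D0 h u) = D0 h (Dp h u) := by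
  funext i
  simp only [Dp, D0, add_sub_cancel_right, sub_add_cancel]
  ring

lemma nh2_D0_le (hh : 0 ≤ h) (hu : PeriodicGrid N u) :
    nh2 N h (D0 h u) ≤ nh2 N h (Dp h u) := by
  have hD0 : ∀ i, D0 h u i ^ 2 ≤ (Dp h u i ^ 2 + Dm h u i ^ 2) / 2 := fun i => by
    have : D0 h u i = (Dp h u i + Dm h u i) / 2 := by simp only [D0, Dp, Dm]; ring
    rw [this]
    nlinarith [sq_nonneg (Dp h u i - Dm h u i)]
  calc nh2 N h (D0 h u) ≤ (nh2 N h (Dp h u) + nh2 N h (Dm h u)) / 2 := by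
        unfold nh2
        rw [← mul_add, mul_div_assoc, ← sum_add_distrib, sum_div]
        gcongr with i
        exact hD0 i
    _ = nh2 N h (Dp h u) := by rw [nh2_Dm hu]; ring

lemma nh2_Dp_Dp_Dp_Dm_Dm (hu : PeriodicGrid N u) :
    nh2 N h (Dp h (Dp h (Dp h (Dm h (Dm h u))))) = nh2 N h ((Dp h)^[5] u) := by
  rw [Dm_Dm_eq_Dp_Dp_comp_add_neg_two, Dp_comp_add, Dp_comp_add, Dp_comp_add]
  exact (hu.iterate_Dp 5).nh2_comp_add (-2)

end Grid

section Sobolev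

variable {N : ℕ} {h : ℝ}

lemma abs_sub_le_sum_abs_sub (f : ℤ → ℝ) {a b : ℤ} (hab : a ≤ b) :
    |f b - f a| ≤ ∑ k ∈ Ico a b, |f (k + 1) - f k| := by
  rw [← sum_Ico_sub_int f hab]
  exact abs_sum_le_sum_abs _ _

lemma abs_sub_le_sum_Icc_abs_sub (f : ℤ → ℝ) {i j : ℤ} (hi : i ∈ Icc (1 : ℤ) N)
    (hj : j ∈ Icc (1 : ℤ) N) : |f i - f j| ≤ ∑ k ∈ Icc (1 : ℤ) N, |f (k + 1) - f k| := by
  wlog hji : j ≤ i generalizing i j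
  · rw [abs_sub_comm]
    exact this hj hi (le_of_not_ge hji)
  rw [mem_Icc] at hi hj
  calc |f i - f j| ≤ ∑ k ∈ Ico j i, |f (k + 1) - f k| := abs_sub_le_sum_abs_sub f hji
    _ ≤ ∑ k ∈ Icc (1 : ℤ) N, |f (k + 1) - f k| :=
      sum_le_sum_of_subset_of_nonneg (Ico_subset_Icc_self.trans (Icc_subset_Icc hj.1 hi.2))
        fun _ _ _ => abs_nonneg _

lemma card_Icc_one_natCast (N : ℕ) : ((Icc (1 : ℤ) N).card : ℝ) = N := by
  simp

lemma abs_le_mean_add_sum_abs_sub (hNh : N * h = 1) (hh : 0 ≤ h) (f : ℤ → ℝ) {i : ℤ}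
    (hi : i ∈ Icc (1 : ℤ) N) :
    |f i| ≤ h * ∑ j ∈ Icc (1 : ℤ) N, |f j| + ∑ k ∈ Icc (1 : ℤ) N, |f (k + 1) - f k| := by
  set T := ∑ k ∈ Icc (1 : ℤ) N, |f (k + 1) - f k|
  calc |f i| = h * ∑ _j ∈ Icc (1 : ℤ) N, |f i| := by
        rw [sum_const, nsmul_eq_mul, card_Icc_one_natCast]
        linear_combination -|f i| * hNh
    _ ≤ h * ∑ j ∈ Icc (1 : ℤ) N, (|f j| + T) := by
        gcongr with j hj
        linarith [abs_sub_abs_le_abs_sub (f i) (f j), abs_sub_le_sum_Icc_abs_sub f hi hj]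
    _ = h * ∑ j ∈ Icc (1 : ℤ) N, |f j| + T := by
        rw [sum_add_distrib, sum_const, nsmul_eq_mul, card_Icc_one_natCast]
        linear_combination T * hNh

lemma sq_mul_sum_abs_le_nh2 (hNh : N * h = 1) (f : ℤ → ℝ) :
    (h * ∑ i ∈ Icc (1 : ℤ) N, |f i|) ^ 2 ≤ nh2 N h f := by
  calc (h * ∑ i ∈ Icc (1 : ℤ) N, |f i|) ^ 2 = h ^ 2 * (∑ i ∈ Icc (1 : ℤ) N, |f i|) ^ 2 := by ring
    _ ≤ h ^ 2 * (N * ∑ i ∈ Icc (1 : ℤ) N, |f i| ^ 2) := by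
        gcongr
        simpa only [card_Icc_one_natCast] using
          sq_sum_le_card_mul_sum_sq (s := Icc (1 : ℤ) N) (f := fun i => |f i|)
    _ = nh2 N h f := by
        simp only [sq_abs, nh2]; linear_combination h * (∑ i ∈ Icc (1 : ℤ) N, f i ^ 2) * hNh

lemma sq_le_two_mul_nh2_add_nh2_Dp (hNh : N * h = 1) (hh : 0 < h) (f : ℤ → ℝ) {i : ℤ}
    (hi : i ∈ Icc (1 : ℤ) N) : f i ^ 2 ≤ 2 * (nh2 N h f + nh2 N h (Dp h f)) := by
  have hvar :
      ∑ k ∈ Icc (1 : ℤ) N, |f (k + 1) - f k| = h * ∑ k ∈ Icc (1 : ℤ) N, |Dp h f k| := by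
    rw [mul_sum]
    congr with k
    rw [Dp, abs_div, abs_of_pos hh, mul_div_cancel₀ _ hh.ne']
  have hf := abs_le_mean_add_sum_abs_sub hNh hh.le f hi
  rw [hvar] at hf
  calc f i ^ 2 = |f i| ^ 2 := (sq_abs _).symm
    _ ≤ (h * ∑ j ∈ Icc (1 : ℤ) N, |f j| + h * ∑ k ∈ Icc (1 : ℤ) N, |Dp h f k|) ^ 2 := by
        gcongr
    _ ≤ 2 * ((h * ∑ j ∈ Icc (1 : ℤ) N, |f j|) ^ 2
          + (h * ∑ k ∈ Icc (1 : ℤ) N, |Dp h f k|) ^ 2) := add_sq_le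
    _ ≤ 2 * (nh2 N h f + nh2 N h (Dp h f)) := by
        gcongr <;> exact sq_mul_sum_abs_le_nh2 hNh _

end Sobolev

/-- Paper's Remark 2, estimate (2.7): for every `ε > 0` there is a constant `c(ε) > 0`,
independent of `N` and of the grid function, such that for every `N ≥ 1` and every periodic
grid function `z`, `max_{1 ≤ i ≤ N} |(D₀z)_i|² ≤ ε ‖D₊³D₋²z‖_h² + c(ε) ‖z‖_h²`
(with `Δx = 1/N`). -/
theorem discrete_max_D0_interpolation (ε : ℝ) (hε : 0 < ε) :
    ∃ c > 0, ∀ N : ℕ, 1 ≤ N → ∀ z : ℤ → ℝ, PeriodicGrid N z →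
      ∀ i ∈ Finset.Icc (1 : ℤ) (N : ℤ),
        (D0 (1 / N) z i) ^ 2
          ≤ ε * nh2 N (1 / N) (Dp (1/N) (Dp (1/N) (Dp (1/N) (Dm (1/N) (Dm (1/N) z)))))
            + c * nh2 N (1 / N) z := by
  set δ := min 1 (ε / 4)
  have hδ0 : 0 < δ := lt_min one_pos (by positivity)
  have hδ1 : δ ≤ 1 := min_le_left _ _
  refine ⟨2 / δ + 2 / δ ^ 2, by positivity, fun N hN z hz i hi => ?_⟩
  set h : ℝ := 1 / N
  have hh : 0 < h := by positivity
  have hNh : N * h = 1 := mul_one_div_cancel (by positivity)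
  set B : ℕ → ℝ := fun k => nh2 N h ((Dp h)^[k] z)
  have hB0 : ∀ k, 0 ≤ B k := fun k => nh2_nonneg hh.le _
  have hB : ∀ k, B (k + 1) ^ 2 ≤ B k * B (k + 2) := fun k => by
    simpa only [B, Function.iterate_succ_apply'] using sq_nh2_Dp_le (hz.iterate_Dp k)
  rw [nh2_Dp_Dp_Dp_Dm_Dm hz]
  calc D0 h z i ^ 2 ≤ 2 * (nh2 N h (D0 h z) + nh2 N h (D0 h (Dp h z))) := by
        simpa only [Dp_D0_comm] using sq_le_two_mul_nh2_add_nh2_Dp hNh hh (D0 h z) hi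
    _ ≤ 2 * (B 1 + B 2) := by
        gcongr
        exacts [nh2_D0_le hh.le hz, nh2_D0_le hh.le hz.Dp]
    _ ≤ 2 * ((δ * B 5 + B 0 / δ ^ 1) + (δ * B 5 + B 0 / δ ^ 2)) := by
        gcongr <;> exact le_mul_add_div_pow_of_sq_le_mul hB0 hB hδ0 hδ1 (by norm_num)
    _ = 4 * δ * B 5 + (2 / δ + 2 / δ ^ 2) * B 0 := by ring
    _ ≤ ε * B 5 + (2 / δ + 2 / δ ^ 2) * B 0 := by
        gcongr
        exacts [hB0 5, by linarith [min_le_right 1 (ε / 4)]]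
end

section
/- For every integer N ≥ 1 and every periodic grid function u one has the summation-by-parts identity (u, D₋D₊²u)_h = (Δx/2) ‖D₊D₋u‖_h². -/
/-!
Summation by parts, `(u, D₋v)_h = -(D₊u, v)_h` for periodic `u, v`, turns the left side into
`-(w, D₊w)_h` with `w = D₊u`. Pointwise `w D₊w + (Δx/2)(D₊w)² = D₊(w²)/2`, a difference that
sums to zero over a period, so `-(w, D₊w)_h = (Δx/2)‖D₊w‖_h²`. Finally `D₊D₋u = D₋w` is `D₊w`
shifted by one index, which has the same norm.
-/

open Finset Function

theorem Finset.sum_Icc_one_sub {M : Type*} [AddCommGroup M] (f : ℤ → M) (n : ℕ) :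
    ∑ i ∈ Icc 1 (n : ℤ), (f (i + 1) - f i) = f (n + 1) - f 1 := by
  induction n with
  | zero => simp
  | succ n ih =>
    rw [Nat.cast_succ, ← insert_Icc_right_eq_Icc_add_one (by omega), sum_insert (by simp), ih]
    abel

namespace Function.Periodic

variable {M : Type*} [AddCommGroup M] {N : ℕ} {f : ℤ → M}

theorem sum_Icc_one_sub_eq_zero (hf : Periodic f N) :
    ∑ i ∈ Icc 1 (N : ℤ), (f (i + 1) - f i) = 0 := by
  rw [sum_Icc_one_sub, add_comm, hf, sub_self]

theorem sum_Icc_one_comp_sub_one (hf : Periodic f N) :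
    ∑ i ∈ Icc 1 (N : ℤ), f (i - 1) = ∑ i ∈ Icc 1 (N : ℤ), f i := by
  have := (hf.sub_const 1).sum_Icc_one_sub_eq_zero
  simp only [add_sub_cancel_right, sum_sub_distrib] at this
  exact (sub_eq_zero.mp this).symm

end Function.Periodic

section GridOperators

variable {N : ℕ} {h : ℝ} {u v w : ℤ → ℝ}

theorem Function.Periodic.dp (hu : Periodic u N) : Periodic (Dp h u) N := fun i => by
  simp only [Dp, add_right_comm i (N : ℤ) 1, hu _]

theorem dm_apply (h : ℝ) (u : ℤ → ℝ) (i : ℤ) : Dm h u i = Dp h u (i - 1) := by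
  simp only [Dm, Dp, sub_add_cancel]

theorem dp_dm_comm (h : ℝ) (u : ℤ → ℝ) : Dp h (Dm h u) = Dm h (Dp h u) := by
  ext i
  simp only [Dm, Dp, sub_add_cancel, add_sub_cancel_right]

theorem iph_dm (hu : Periodic u N) (hv : Periodic v N) :
    iph N h u (Dm h v) = -iph N h (Dp h u) v := by
  have hterm : ∀ i, u i * Dm h v i + Dp h u i * v i
      = (u (i + 1) * v (i + 1 - 1) - u i * v (i - 1)) / h := fun i => by
    simp only [Dm, Dp, add_sub_cancel_right]
    ring
  have hsum := (hu.mul (hv.sub_const 1)).sum_Icc_one_sub_eq_zero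
  simp only [Pi.mul_apply] at hsum
  rw [eq_neg_iff_add_eq_zero, iph, iph, ← mul_add, ← sum_add_distrib,
    sum_congr rfl fun i _ => hterm i, ← sum_div, hsum, zero_div, mul_zero]

theorem iph_self_dp (hw : Periodic w N) : iph N h w (Dp h w) = -(h / 2 * nh2 N h (Dp h w)) := by
  rw [eq_neg_iff_add_eq_zero]
  rcases eq_or_ne h 0 with rfl | hh
  · simp [iph, nh2]
  have hterm : ∀ i, w i * Dp h w i + h / 2 * Dp h w i ^ 2 = (w (i + 1) ^ 2 - w i ^ 2) / (2 * h) :=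
    fun i => by
      simp only [Dp]
      field_simp
      ring
  have hsum := (hw.mul hw).sum_Icc_one_sub_eq_zero
  simp only [Pi.mul_apply, ← sq] at hsum
  rw [iph, nh2, mul_left_comm, ← mul_add, mul_sum, ← sum_add_distrib,
    sum_congr rfl fun i _ => hterm i, ← sum_div, hsum, zero_div, mul_zero]

theorem nh2_dm (hw : Periodic w N) : nh2 N h (Dm h w) = nh2 N h (Dp h w) := by
  simp only [nh2, dm_apply]
  rw [(hw.dp.comp fun x => x ^ 2).sum_Icc_one_comp_sub_one (f := fun i => Dp h w i ^ 2)]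

end GridOperators

theorem summation_by_parts_airy_general (N : ℕ) (Δx : ℝ)
    (u : ℤ → ℝ) (hu : PeriodicGrid N u) :
    iph N Δx u (Dm Δx (Dp Δx (Dp Δx u))) = (Δx / 2) * nh2 N Δx (Dp Δx (Dm Δx u)) := by
  have hu : Periodic u N := hu
  rw [iph_dm hu hu.dp.dp, iph_self_dp hu.dp, neg_neg, dp_dm_comm, nh2_dm hu.dp]

/-- Paper's identity (2.12): for every `N ≥ 1` and every periodic grid function `u`,
`(u, D₋D₊²u)_h = (Δx/2) ‖D₊D₋u‖_h²` with `Δx = 1/N`. -/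
theorem summation_by_parts_airy (N : ℕ) (hN : 1 ≤ N) (Δx : ℝ) (hΔx : Δx = 1 / N)
    (u : ℤ → ℝ) (hu : PeriodicGrid N u) :
    iph N Δx u (Dm Δx (Dp Δx (Dp Δx u))) = (Δx / 2) * nh2 N Δx (Dp Δx (Dm Δx u)) :=
  summation_by_parts_airy_general N Δx u hu
end
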